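/- Let B denote the ℂ-linear span, inside the space of functions (0,∞) → ℂ, of the functions t ↦ (log t)^m · t^ω for m ∈ ℕ and ω ∈ ℂ, where t^ω := exp(ω · log t). Let λ ∈ ℂ and let x, y : (0,∞) → ℂ be twice differentiable with x''(t) = −λ/(4t²)·x(t) and y''(t) = (−λ·y(t) + x(t))/(4t²) for all t > 0 (a Jordan-block subsystem of the first variational equation of a degree −2 potential with non-diagonalisable Hessian, at zero energy where φ(t) = √(2t)). Then there exist g, h ∈ B such that x(t) = √(2t)·g(t) and y(t) = √(2t)·h(t) for all t > 0. -/

import Mathlib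

/-!
The equation `4t²x'' + λx = 0` is of Euler type: with `r(r - 1) = -λ/4`, the function `t^r`
solves it, and reduction of order expresses every solution of `4t²z'' + λz = b` through two
antiderivatives of products of `b` with powers of `t`. The span `B` of the functions
`(log t)^m t^ω` is closed under products and has antiderivatives in itself
(`∫ (log t)^m t^ω` is computed by parts, with `∫ t^(-1) (log t)^m = (log t)^(m+1)/(m+1)`),
so `x ∈ B`, then `y ∈ B` with `b = x`. Finally `1/√(2t) = t^(-1/2)/√2 ∈ B`.
-/

/-- The space `B`: the `ℂ`-linear span of the functions `t ↦ (log t)^m · t^ω`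
(`m ∈ ℕ`, `ω ∈ ℂ`, `t^ω := exp(ω log t)`) on `(0,∞)`. -/
noncomputable def logExpSpan : Submodule ℂ (ℝ → ℂ) :=
  Submodule.span ℂ
    {f : ℝ → ℂ | ∃ (m : ℕ) (ω : ℂ),
      f = fun t => ((Real.log t : ℂ)) ^ m * Complex.exp (ω * (Real.log t : ℂ))}

noncomputable def logMonomial (m : ℕ) (ω : ℂ) (t : ℝ) : ℂ :=
  (Real.log t : ℂ) ^ m * Complex.exp (ω * Real.log t)

lemma logMonomial_mem_logExpSpan (m : ℕ) (ω : ℂ) : logMonomial m ω ∈ logExpSpan :=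
  Submodule.subset_span ⟨m, ω, rfl⟩

lemma logMonomial_mul_logMonomial (m n : ℕ) (ω η : ℂ) :
    logMonomial m ω * logMonomial n η = logMonomial (m + n) (ω + η) := by
  ext t
  simp only [Pi.mul_apply, logMonomial, pow_add, add_mul, Complex.exp_add]
  ring

lemma logMonomial_zero_ne_zero (ω : ℂ) (t : ℝ) : logMonomial 0 ω t ≠ 0 := by
  simp [logMonomial, Complex.exp_ne_zero]

lemma logMonomial_sub_one (m : ℕ) (ω : ℂ) {t : ℝ} (ht : 0 < t) :
    logMonomial m (ω - 1) t = logMonomial m ω t * (t : ℂ)⁻¹ := by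
  have : Complex.exp (Real.log t) = t := by rw [← Complex.ofReal_exp, Real.exp_log ht]
  simp only [logMonomial, sub_mul, one_mul, Complex.exp_sub, this]
  ring

lemma const_mem_logExpSpan (c : ℂ) : (fun _ : ℝ => c) ∈ logExpSpan := by
  have : (fun _ : ℝ => c) = c • logMonomial 0 0 := by ext t; simp [logMonomial]
  rw [this]
  exact Submodule.smul_mem _ _ (logMonomial_mem_logExpSpan 0 0)

lemma mul_mem_logExpSpan {f g : ℝ → ℂ} (hf : f ∈ logExpSpan) (hg : g ∈ logExpSpan) :
    f * g ∈ logExpSpan := by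
  have hmul := Submodule.mul_mem_mul hf hg
  rw [logExpSpan, Submodule.span_mul_span] at hmul
  refine Submodule.span_le.mpr ?_ hmul
  rintro _ ⟨_, ⟨m, ω, rfl⟩, _, ⟨n, η, rfl⟩, rfl⟩
  change logMonomial m ω * logMonomial n η ∈ logExpSpan
  rw [logMonomial_mul_logMonomial]
  exact logMonomial_mem_logExpSpan _ _

lemma hasDerivAt_logMonomial (m : ℕ) (ω : ℂ) {t : ℝ} (ht : 0 < t) :
    HasDerivAt (logMonomial m ω)
      (m * logMonomial (m - 1) (ω - 1) t + ω * logMonomial m (ω - 1) t) t := by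
  have hlog : HasDerivAt (fun s : ℝ => (Real.log s : ℂ)) ((t⁻¹ : ℝ) : ℂ) t :=
    (Real.hasDerivAt_log ht.ne').ofReal_comp
  refine ((hlog.pow m).mul (hlog.const_mul ω).cexp).congr_deriv ?_
  rw [logMonomial_sub_one _ _ ht, logMonomial_sub_one _ _ ht]
  simp only [logMonomial, Complex.ofReal_inv, Pi.pow_apply]
  ring

lemma exists_hasDerivAt_logMonomial (m : ℕ) (ω : ℂ) :
    ∃ P ∈ logExpSpan, ∀ t : ℝ, 0 < t → HasDerivAt P (logMonomial m ω t) t := by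
  by_cases hω : ω = -1
  · refine ⟨((m : ℂ) + 1)⁻¹ • logMonomial (m + 1) 0,
      Submodule.smul_mem _ _ (logMonomial_mem_logExpSpan _ _), fun t ht => ?_⟩
    have hm : (m : ℂ) + 1 ≠ 0 := by exact_mod_cast m.succ_ne_zero
    refine ((hasDerivAt_logMonomial (m + 1) 0 ht).const_smul ((m : ℂ) + 1)⁻¹).congr_deriv ?_
    simp [hω, hm]
  have hω' : ω + 1 ≠ 0 := fun h => hω (eq_neg_of_add_eq_zero_left h)
  -- `(log t)^m t^ω = ((log t)^m t^(ω+1))' / (ω + 1) - m/(ω + 1) · (log t)^(m-1) t^ω`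
  induction m with
  | zero =>
    refine ⟨(ω + 1)⁻¹ • logMonomial 0 (ω + 1),
      Submodule.smul_mem _ _ (logMonomial_mem_logExpSpan _ _), fun t ht => ?_⟩
    refine ((hasDerivAt_logMonomial 0 (ω + 1) ht).const_smul (ω + 1)⁻¹).congr_deriv ?_
    simp [hω']
  | succ m ih =>
    obtain ⟨P, hP, hPderiv⟩ := ih
    refine ⟨(ω + 1)⁻¹ • logMonomial (m + 1) (ω + 1) - (((m : ℂ) + 1) * (ω + 1)⁻¹) • P,
      Submodule.sub_mem _ (Submodule.smul_mem _ _ (logMonomial_mem_logExpSpan _ _))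
        (Submodule.smul_mem _ _ hP), fun t ht => ?_⟩
    refine (((hasDerivAt_logMonomial (m + 1) (ω + 1) ht).const_smul (ω + 1)⁻¹).sub
      ((hPderiv t ht).const_smul (((m : ℂ) + 1) * (ω + 1)⁻¹))).congr_deriv ?_
    simp only [smul_eq_mul, add_sub_cancel_right, Nat.add_sub_cancel]
    field_simp
    push_cast
    ring

lemma exists_hasDerivAt_of_mem_logExpSpan {p : ℝ → ℂ} (hp : p ∈ logExpSpan) :
    ∃ P ∈ logExpSpan, ∀ t : ℝ, 0 < t → HasDerivAt P (p t) t := by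
  induction hp using Submodule.span_induction with
  | mem f hf =>
    obtain ⟨m, ω, rfl⟩ := hf
    exact exists_hasDerivAt_logMonomial m ω
  | zero => exact ⟨0, Submodule.zero_mem _, fun t _ => hasDerivAt_const t 0⟩
  | add f g _ _ ihf ihg =>
    obtain ⟨P, hP, hPderiv⟩ := ihf
    obtain ⟨Q, hQ, hQderiv⟩ := ihg
    exact ⟨P + Q, Submodule.add_mem _ hP hQ, fun t ht => (hPderiv t ht).add (hQderiv t ht)⟩
  | smul c f _ ihf =>
    obtain ⟨P, hP, hPderiv⟩ := ihf
    exact ⟨c • P, Submodule.smul_mem _ _ hP, fun t ht => (hPderiv t ht).const_smul c⟩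

lemma exists_mem_logExpSpan_of_hasDerivAt {f p : ℝ → ℂ} (hp : p ∈ logExpSpan)
    (hf : ∀ t : ℝ, 0 < t → HasDerivAt f (p t) t) :
    ∃ F ∈ logExpSpan, ∀ t : ℝ, 0 < t → f t = F t := by
  obtain ⟨P, hP, hPderiv⟩ := exists_hasDerivAt_of_mem_logExpSpan hp
  obtain ⟨a, ha⟩ := isOpen_Ioi.exists_eq_add_of_deriv_eq isPreconnected_Ioi
    (fun t ht => (hf t ht).differentiableAt.differentiableWithinAt)
    (fun t ht => (hPderiv t ht).differentiableAt.differentiableWithinAt)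
    (fun t ht => (hf t ht).deriv.trans (hPderiv t ht).deriv.symm)
  exact ⟨P + fun _ => a, Submodule.add_mem _ hP (const_mem_logExpSpan a), fun t ht => ha ht⟩

lemma exists_mul_sub_one_eq (c : ℂ) : ∃ r : ℂ, r * (r - 1) = c := by
  obtain ⟨μ, hμ⟩ := IsAlgClosed.exists_eq_mul_self (1 + 4 * c)
  exact ⟨(1 + μ) / 2, by linear_combination -hμ / 4⟩

/-- Reduction of order for the Euler equation `4t²z'' + λz = b`: with `u = t^r` solving the
homogeneous equation, the Wronskian `W = z'u - zu'` satisfies `W' = ub/(4t²)` and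
`(z/u)' = W/u²`. -/
theorem exists_mem_logExpSpan_of_euler_eq (lam : ℂ) {z b : ℝ → ℂ} (hb : b ∈ logExpSpan)
    (hz1 : ∀ t : ℝ, 0 < t → DifferentiableAt ℝ z t)
    (hz2 : ∀ t : ℝ, 0 < t → DifferentiableAt ℝ (deriv z) t)
    (hz : ∀ t : ℝ, 0 < t → deriv (deriv z) t = (-lam * z t + b t) / (4 * (t : ℂ) ^ 2)) :
    ∃ w ∈ logExpSpan, ∀ t : ℝ, 0 < t → z t = w t := by
  obtain ⟨r, hr⟩ := exists_mul_sub_one_eq (-lam / 4)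
  set u := logMonomial 0 r
  have hu : ∀ t : ℝ, 0 < t → HasDerivAt u (r * logMonomial 0 (r - 1) t) t := fun t ht => by
    simpa using hasDerivAt_logMonomial 0 r ht
  have hu' : ∀ t : ℝ, 0 < t → HasDerivAt (fun s => r * logMonomial 0 (r - 1) s)
      (r * (r - 1) * (u t * (t : ℂ)⁻¹ * (t : ℂ)⁻¹)) t := fun t ht => by
    have := (hasDerivAt_logMonomial 0 (r - 1) ht).const_mul r
    rw [logMonomial_sub_one 0 _ ht, logMonomial_sub_one 0 _ ht] at this
    simpa [mul_assoc] using this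
  obtain ⟨W, hW, hzW⟩ : ∃ W ∈ logExpSpan, ∀ t : ℝ, 0 < t →
      deriv z t * u t - z t * (r * logMonomial 0 (r - 1) t) = W t := by
    refine exists_mem_logExpSpan_of_hasDerivAt (Submodule.smul_mem _ (4⁻¹ : ℂ)
      (mul_mem_logExpSpan (logMonomial_mem_logExpSpan 0 (r - 2)) hb)) fun t ht => ?_
    refine (((hz2 t ht).hasDerivAt.mul (hu t ht)).sub
      ((hz1 t ht).hasDerivAt.mul (hu' t ht))).congr_deriv ?_
    have ht' : (t : ℂ) ≠ 0 := by exact_mod_cast ht.ne'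
    rw [show r - 2 = r - 1 - 1 by ring, Pi.smul_apply, Pi.mul_apply,
      logMonomial_sub_one 0 (r - 1) ht, logMonomial_sub_one 0 r ht, hz t ht, hr]
    simp only [u, smul_eq_mul]
    field_simp
    ring
  obtain ⟨V, hV, hzV⟩ : ∃ V ∈ logExpSpan, ∀ t : ℝ, 0 < t → z t / u t = V t := by
    refine exists_mem_logExpSpan_of_hasDerivAt
      (mul_mem_logExpSpan (logMonomial_mem_logExpSpan 0 (-2 * r)) hW) fun t ht => ?_
    refine ((hz1 t ht).hasDerivAt.div (hu t ht) (logMonomial_zero_ne_zero r t)).congr_deriv ?_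
    have hu2 : logMonomial 0 (-2 * r) t * u t ^ 2 = 1 := by
      rw [sq, ← Pi.mul_apply _ _ t, ← Pi.mul_apply _ _ t, logMonomial_mul_logMonomial,
        logMonomial_mul_logMonomial, show -2 * r + (r + r) = 0 by ring]
      simp [logMonomial]
    rw [Pi.mul_apply, ← hzW t ht, div_eq_iff (pow_ne_zero 2 (logMonomial_zero_ne_zero r t)),
      mul_right_comm, hu2, one_mul]
  refine ⟨u * V, mul_mem_logExpSpan (logMonomial_mem_logExpSpan 0 r) hV, fun t ht => ?_⟩
  rw [Pi.mul_apply, ← hzV t ht, mul_div_cancel₀ _ (logMonomial_zero_ne_zero r t)]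

lemma exists_sqrt_two_mul_eq_of_mem_logExpSpan {f : ℝ → ℂ} (hf : f ∈ logExpSpan) :
    ∃ g ∈ logExpSpan, ∀ t : ℝ, 0 < t → f t = (Real.sqrt (2 * t) : ℂ) * g t := by
  refine ⟨((Real.sqrt 2 : ℂ)⁻¹ • logMonomial 0 (-1 / 2)) * f,
    mul_mem_logExpSpan (Submodule.smul_mem _ _ (logMonomial_mem_logExpSpan _ _)) hf,
    fun t ht => ?_⟩
  have hsqrt : Real.sqrt t * logMonomial 0 (-1 / 2) t = 1 := by
    rw [Real.sqrt_eq_rpow, Real.rpow_def_of_pos ht, Complex.ofReal_exp, logMonomial,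
      pow_zero, one_mul, ← Complex.exp_add]
    push_cast
    ring_nf
    exact Complex.exp_zero
  have h2 : (Real.sqrt 2 : ℂ) ≠ 0 := by exact_mod_cast (Real.sqrt_pos.mpr two_pos).ne'
  rw [Real.sqrt_mul zero_le_two, Pi.mul_apply, Pi.smul_apply, smul_eq_mul, Complex.ofReal_mul]
  calc f t
      = (Real.sqrt 2 * (Real.sqrt 2 : ℂ)⁻¹) * (Real.sqrt t * logMonomial 0 (-1 / 2) t) * f t := by
        rw [mul_inv_cancel₀ h2, hsqrt, one_mul, one_mul]
    _ = _ := by ring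

/-- Jordan-block subsystem of `VE₁` for a degree `−2` potential at zero energy:
if `x'' = −λ/(4t²)·x` and `y'' = (−λ·y + x)/(4t²)` on `(0,∞)`, then
`x = √(2t)·g` and `y = √(2t)·h` with `g, h ∈ B`. -/
theorem stmt_16 (lam : ℂ) (x y : ℝ → ℂ)
    (hx1 : ∀ t : ℝ, 0 < t → DifferentiableAt ℝ x t)
    (hx2 : ∀ t : ℝ, 0 < t → DifferentiableAt ℝ (deriv x) t)
    (hy1 : ∀ t : ℝ, 0 < t → DifferentiableAt ℝ y t)
    (hy2 : ∀ t : ℝ, 0 < t → DifferentiableAt ℝ (deriv y) t)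
    (hx : ∀ t : ℝ, 0 < t →
      deriv (deriv x) t = -lam / (4 * (t : ℂ) ^ 2) * x t)
    (hy : ∀ t : ℝ, 0 < t →
      deriv (deriv y) t = (-lam * y t + x t) / (4 * (t : ℂ) ^ 2)) :
    ∃ g ∈ logExpSpan, ∃ h ∈ logExpSpan, ∀ t : ℝ, 0 < t →
      x t = (Real.sqrt (2 * t) : ℂ) * g t ∧
      y t = (Real.sqrt (2 * t) : ℂ) * h t := by
  obtain ⟨u, hu, hxu⟩ := exists_mem_logExpSpan_of_euler_eq lam (const_mem_logExpSpan 0) hx1 hx2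
    fun t ht => by rw [hx t ht, add_zero, div_mul_eq_mul_div]
  obtain ⟨v, hv, hyv⟩ := exists_mem_logExpSpan_of_euler_eq lam hu hy1 hy2
    fun t ht => by rw [hy t ht, hxu t ht]
  obtain ⟨g, hg, hug⟩ := exists_sqrt_two_mul_eq_of_mem_logExpSpan hu
  obtain ⟨h, hh, hvh⟩ := exists_sqrt_two_mul_eq_of_mem_logExpSpan hv
  exact ⟨g, hg, h, hh, fun t ht => ⟨(hxu t ht).trans (hug t ht), (hyv t ht).trans (hvh t ht)⟩⟩
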